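/- Let X be a 2-based Banach space with constants c, C and natural parameterization r. Let s, v, α, β ∈ ℝ be such that r is differentiable at s and at v, r'(s) = r(v), and r'(v) = α·r(v) + β·r(s). Then |α| ≤ ((C + c)·C/c²)·|β|. -/

import Mathlib

noncomputable section
open MeasureTheory Set Filter
open scoped ENNReal Topology

variable {X : Type*} [NormedAddCommGroup X] [NormedSpace ℝ X]

/-- `e^{it} = cos t • e₁ + sin t • e₂` for the basis `b 0, b 1`. -/
def expV (b : Module.Basis (Fin 2) ℝ X) (t : ℝ) : X :=
  Real.cos t • b 0 + Real.sin t • b 1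

/-- The polar parameterization `p(t) = e^{it}/‖e^{it}‖` of the unit sphere. -/
def polarParam (b : Module.Basis (Fin 2) ℝ X) (t : ℝ) : X :=
  ‖expV b t‖⁻¹ • expV b t

/-- The Euclidean norm `|x| = √(e₁*(x)² + e₂*(x)²)` associated to the basis. -/
def euclNorm (b : Module.Basis (Fin 2) ℝ X) (x : X) : ℝ :=
  Real.sqrt ((b.coord 0 x)^2 + (b.coord 1 x)^2)

/-- `c = min{‖x‖ : |x| = 1}`. -/
def cConst (b : Module.Basis (Fin 2) ℝ X) : ℝ :=
  sInf (norm '' {x : X | euclNorm b x = 1})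

/-- `C = max{‖x‖ : |x| = 1}`. -/
def CConst (b : Module.Basis (Fin 2) ℝ X) : ℝ :=
  sSup (norm '' {x : X | euclNorm b x = 1})

/-- The right derivative of a function `f : ℝ → X`. -/
def rightDeriv (f : ℝ → X) (t : ℝ) : X := derivWithin f (Ici t) t

/-- The left derivative of a function `f : ℝ → X`. -/
def leftDeriv (f : ℝ → X) (t : ℝ) : X := derivWithin f (Iic t) t

/-- The arc-length function `s(t) = ∫₀^t ‖p'₊(u)‖ du`. -/
def arcLen (b : Module.Basis (Fin 2) ℝ X) (t : ℝ) : ℝ :=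
  ∫ u in (0:ℝ)..t, ‖rightDeriv (polarParam b) u‖

/-- The half-length `L = s(π)` of the unit sphere. -/
def halfLen (b : Module.Basis (Fin 2) ℝ X) : ℝ := arcLen b Real.pi

/-- The inverse `t = s⁻¹` of the arc-length function. -/
def arcInv (b : Module.Basis (Fin 2) ℝ X) : ℝ → ℝ := Function.invFun (arcLen b)

/-- The natural parameterization `r = p ∘ t` of the unit sphere. -/
def natParam (b : Module.Basis (Fin 2) ℝ X) : ℝ → X := polarParam b ∘ arcInv b

/-- Local absolute continuity of `f` with a.e. derivative `f'`, in the sense that `f` is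
differentiable almost everywhere, `f'` is locally integrable, and `f` is recovered from `f'`
by integration. -/
def LocAC {E : Type*} [NormedAddCommGroup E] [NormedSpace ℝ E] [CompleteSpace E]
    (f f' : ℝ → E) : Prop :=
  (∀ᵐ t : ℝ, HasDerivAt f (f' t) t) ∧ LocallyIntegrable f' volume ∧
    ∀ a b : ℝ, a ≤ b → f b - f a = ∫ t in a..b, f' t

/-- `s` is a Lebesgue point of `g`. -/
def LebesguePoint {E : Type*} [NormedAddCommGroup E] (g : ℝ → E) (s : ℝ) : Prop :=
  Tendsto (fun ε : ℝ => (1/ε) * ∫ t in (0:ℝ)..ε, ‖g (s + t) - g s‖) (𝓝[≠] (0:ℝ)) (𝓝 0)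

/-! Since `‖r‖ ≡ 1`, a functional `φ` of norm at most `1` with `φ (r v) = 1` makes `φ ∘ r` maximal
at `v`, so `φ (r'(v)) = 0`. Applied to `r'(v) = α r(v) + β r(s)` this gives
`|α| = |β| |φ (r s)| ≤ |β|`, and `(C + c) C / c² ≥ 1` because `0 < c ≤ C`. -/

section MaxNorm

variable {E : Type*} [NormedAddCommGroup E] [NormedSpace ℝ E]

theorem exists_dual_apply_deriv_eq_zero_of_isLocalMax_norm {f : ℝ → E} {f' : E} {v : ℝ}
    (hmax : IsLocalMax (fun t => ‖f t‖) v) (hf : HasDerivAt f f' v) :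
    ∃ φ : StrongDual ℝ E, ‖φ‖ ≤ 1 ∧ φ (f v) = ‖f v‖ ∧ φ f' = 0 := by
  obtain ⟨φ, hφ, hφv⟩ := exists_dual_vector'' ℝ (f v)
  have hφf : ∀ x, φ x ≤ ‖x‖ := fun x =>
    (le_abs_self _).trans ((φ.le_opNorm x).trans (mul_le_of_le_one_left (norm_nonneg x) hφ))
  have hmax' : IsLocalMax (fun t => φ (f t)) v :=
    hmax.mono fun t ht => (hφf _).trans (ht.trans_eq hφv.symm)
  exact ⟨φ, hφ, hφv, hmax'.hasDerivAt_eq_zero (φ.hasFDerivAt.comp_hasDerivAt v hf)⟩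

theorem abs_le_abs_of_isLocalMax_norm_of_hasDerivAt {f : ℝ → E} {w : E} {v α β : ℝ}
    (hmax : IsLocalMax (fun t => ‖f t‖) v) (hv : f v ≠ 0)
    (hf : HasDerivAt f (α • f v + β • w) v) (hw : ‖w‖ ≤ ‖f v‖) : |α| ≤ |β| := by
  obtain ⟨φ, hφ, hφv, hφ'⟩ := exists_dual_apply_deriv_eq_zero_of_isLocalMax_norm hmax hf
  have hα : α * ‖f v‖ = -(β * φ w) := by
    simp only [map_add, map_smul, smul_eq_mul, hφv] at hφ'
    linarith
  have hφw : |φ w| ≤ ‖f v‖ :=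
    (φ.le_opNorm w).trans ((mul_le_of_le_one_left (norm_nonneg w) hφ).trans hw)
  have hpos : 0 < ‖f v‖ := norm_pos_iff.2 hv
  refine le_of_mul_le_mul_right ?_ hpos
  calc |α| * ‖f v‖ = |β| * |φ w| := by
        rw [← abs_norm (f v), ← abs_mul, hα, abs_neg, abs_mul]
    _ ≤ |β| * ‖f v‖ := mul_le_mul_of_nonneg_left hφw (abs_nonneg β)

end MaxNorm

section Basis

variable (b : Module.Basis (Fin 2) ℝ X)

theorem coord_expV_zero (t : ℝ) : b.coord 0 (expV b t) = Real.cos t := by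
  simp [expV]

theorem coord_expV_one (t : ℝ) : b.coord 1 (expV b t) = Real.sin t := by
  simp [expV]

theorem expV_ne_zero (t : ℝ) : expV b t ≠ 0 := by
  intro h
  have h0 := coord_expV_zero b t
  have h1 := coord_expV_one b t
  rw [h, map_zero] at h0 h1
  nlinarith [Real.sin_sq_add_cos_sq t]

theorem norm_natParam (t : ℝ) : ‖natParam b t‖ = 1 := by
  rw [natParam, Function.comp_apply, polarParam, norm_smul, norm_inv, norm_norm,
    inv_mul_cancel₀ (norm_ne_zero_iff.2 (expV_ne_zero b _))]

theorem isCompact_euclSphere : IsCompact {x : X | euclNorm b x = 1} := by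
  have : FiniteDimensional ℝ X := b.finiteDimensional_of_finite
  have hcont : Continuous (euclNorm b) :=
    (((b.coord 0).continuous_of_finiteDimensional.pow 2).add
      ((b.coord 1).continuous_of_finiteDimensional.pow 2)).sqrt
  refine (isCompact_closedBall (0 : Fin 2 → ℝ) 1).image
    (LinearMap.continuous_of_finiteDimensional b.equivFun.symm.toLinearMap)
    |>.of_isClosed_subset (isClosed_eq hcont continuous_const) fun x hx => ?_
  refine ⟨b.equivFun x, ?_, b.equivFun.symm_apply_apply x⟩
  have hcoord : ∀ i, |b.coord i x| ≤ 1 := fun i => by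
    rw [← hx.out]
    apply Real.abs_le_sqrt
    fin_cases i <;> simp [sq_nonneg]
  simpa [pi_norm_le_iff_of_nonneg] using hcoord

theorem euclSphere_nonempty : {x : X | euclNorm b x = 1}.Nonempty :=
  ⟨b 0, by simp [euclNorm]⟩

theorem cConst_mem : cConst b ∈ norm '' {x : X | euclNorm b x = 1} :=
  ((isCompact_euclSphere b).image continuous_norm).sInf_mem ((euclSphere_nonempty b).image _)

theorem cConst_pos : 0 < cConst b := by
  obtain ⟨x, hx, hxc⟩ := cConst_mem b
  rw [← hxc, norm_pos_iff]
  rintro rfl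
  simp [euclNorm] at hx

theorem cConst_le_CConst : cConst b ≤ CConst b :=
  le_csSup ((isCompact_euclSphere b).image continuous_norm).bddAbove (cConst_mem b)

theorem one_le_natParam_constant : 1 ≤ (CConst b + cConst b) * CConst b / cConst b ^ 2 := by
  have hc := cConst_pos b
  have hcC := cConst_le_CConst b
  rw [le_div_iff₀ (by positivity)]
  nlinarith

end Basis

theorem natParam_alpha_beta_general (b : Module.Basis (Fin 2) ℝ X)
    (s v α β : ℝ)
    (hv : DifferentiableAt ℝ (natParam b) v)
    (h2 : deriv (natParam b) v = α • natParam b v + β • natParam b s) :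
    |α| ≤ ((CConst b + cConst b) * CConst b / (cConst b)^2) * |β| := by
  have hmax : IsLocalMax (fun t => ‖natParam b t‖) v :=
    Eventually.of_forall fun t => (norm_natParam b t).trans_le (norm_natParam b v).ge
  have hrv : natParam b v ≠ 0 := ne_zero_of_norm_ne_zero (by simp [norm_natParam])
  have hαβ : |α| ≤ |β| := abs_le_abs_of_isLocalMax_norm_of_hasDerivAt hmax hrv
    (h2 ▸ hv.hasDerivAt) (by rw [norm_natParam, norm_natParam])
  exact hαβ.trans (le_mul_of_one_le_left (abs_nonneg β) (one_le_natParam_constant b))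

/-- If `r'(s) = r(v)` and `r'(v) = α·r(v) + β·r(s)`, then `|α| ≤ ((C+c)·C/c²)·|β|`. -/
theorem natParam_alpha_beta [CompleteSpace X] (b : Module.Basis (Fin 2) ℝ X)
    (s v α β : ℝ)
    (hs : DifferentiableAt ℝ (natParam b) s)
    (hv : DifferentiableAt ℝ (natParam b) v)
    (h1 : deriv (natParam b) s = natParam b v)
    (h2 : deriv (natParam b) v = α • natParam b v + β • natParam b s) :
    |α| ≤ ((CConst b + cConst b) * CConst b / (cConst b)^2) * |β| :=
  natParam_alpha_beta_general b s v α β hv h2
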